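/- arXiv:2301.13292 — 2 statements merged into one kernel-verified Lean document; each statement's English description precedes it below -/
import Mathlib

section
/- The function x ↦ -ln(1 - F(x)) is strictly convex on ℝ. -/
/-- The Gaussian error function `F(z) = (1/√(2π)) ∫_{-∞}^z e^{-s²/2} ds`. -/
noncomputable def F (z : ℝ) : ℝ :=
  (1 / Real.sqrt (2 * Real.pi)) * ∫ s in Set.Iic z, Real.exp (-s ^ 2 / 2)

/-!
The derivative of `-log (1 - F)` is the hazard rate `φ / (1 - F)` of the standard normal law,
so it suffices that this rate is strictly increasing. Since `φ' x = -x φ x`, its derivative is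
`φ x (φ x - x (1 - F x)) / (1 - F x)²`, which is positive by the Mills-ratio inequality
`x (1 - F x) < φ x`; the latter holds because `φ x = ∫_x^∞ s φ s ds > x ∫_x^∞ φ s ds`.
-/

open Real MeasureTheory Set Filter Topology ProbabilityTheory NNReal

lemma hasDerivAt_gaussianPDFReal (μ : ℝ) (v : ℝ≥0) (x : ℝ) :
    HasDerivAt (gaussianPDFReal μ v) (-(x - μ) / v * gaussianPDFReal μ v x) x := by
  have hexponent : HasDerivAt (fun y => -(y - μ) ^ 2 / (2 * v)) (-(x - μ) / v) x := by
    refine ((((hasDerivAt_id' x).sub_const μ).fun_pow 2).fun_neg.div_const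
      (2 * (v : ℝ))).congr_deriv ?_
    ring
  exact (hexponent.exp.const_mul _).congr_deriv (by rw [gaussianPDFReal]; ring)

lemma setIntegral_Ioi_pos {g : ℝ → ℝ} {a : ℝ} (hg : ∀ s ∈ Ioi a, 0 < g s)
    (hgi : IntegrableOn g (Ioi a)) : 0 < ∫ s in Ioi a, g s := by
  rw [setIntegral_pos_iff_support_of_nonneg_ae
    ((ae_restrict_iff' measurableSet_Ioi).2 (ae_of_all _ fun s hs => (hg s hs).le)) hgi,
    show Function.support g ∩ Ioi a = Ioi a from inter_eq_right.2 fun s hs => (hg s hs).ne']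
  simp

section

local notation "φ" => gaussianPDFReal 0 1

lemma gaussianPDFReal_zero_one (s : ℝ) : φ s = (√(2 * π))⁻¹ * exp (-s ^ 2 / 2) := by
  simp [gaussianPDFReal]

lemma F_eq_integral_gaussianPDFReal (z : ℝ) : F z = ∫ s in Iic z, φ s := by
  simp only [F, gaussianPDFReal_zero_one, integral_const_mul, one_div]

lemma one_sub_F_eq_integral_Ioi (x : ℝ) : 1 - F x = ∫ s in Ioi x, φ s := by
  have hφ := integrable_gaussianPDFReal 0 1
  rw [← integral_gaussianPDFReal_eq_one 0 one_ne_zero,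
    ← intervalIntegral.integral_Iic_add_Ioi hφ.integrableOn hφ.integrableOn,
    F_eq_integral_gaussianPDFReal, add_sub_cancel_left]

lemma one_sub_F_pos (x : ℝ) : 0 < 1 - F x := by
  rw [one_sub_F_eq_integral_Ioi]
  exact setIntegral_Ioi_pos (fun s _ => gaussianPDFReal_pos 0 1 s one_ne_zero)
    (integrable_gaussianPDFReal 0 1).integrableOn

lemma hasDerivAt_F (x : ℝ) : HasDerivAt F (φ x) x := by
  have hφ := integrable_gaussianPDFReal 0 1
  have hcont : Continuous φ :=
    continuous_iff_continuousAt.2 fun s => (hasDerivAt_gaussianPDFReal 0 1 s).continuousAt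
  have hF : F = fun z => (∫ s in Iic 0, φ s) + ∫ s in (0 : ℝ)..z, φ s := by
    ext z
    rw [F_eq_integral_gaussianPDFReal,
      ← intervalIntegral.integral_Iic_sub_Iic hφ.integrableOn hφ.integrableOn, add_sub_cancel]
  rw [hF]
  exact (intervalIntegral.integral_hasDerivAt_right hφ.intervalIntegrable
    (hcont.stronglyMeasurableAtFilter _ _) hcont.continuousAt).const_add _

lemma integrable_id_mul_gaussianPDFReal : Integrable fun s => s * φ s := by
  refine ((integrable_mul_exp_neg_mul_sq (b := 1 / 2) (by norm_num)).const_mul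
    (√(2 * π))⁻¹).congr (ae_of_all _ fun s => ?_)
  simp only [gaussianPDFReal_zero_one]
  ring_nf

lemma integral_Ioi_mul_gaussianPDFReal (x : ℝ) : ∫ s in Ioi x, s * φ s = φ x := by
  have hlim : Tendsto (fun s => -φ s) atTop (𝓝 0) := by
    have := tendsto_exp_neg_atTop_nhds_zero.comp
      ((tendsto_pow_atTop two_ne_zero).atTop_div_const (two_pos : (0 : ℝ) < 2))
    simpa [gaussianPDFReal_zero_one, neg_div] using (this.const_mul (√(2 * π))⁻¹).neg
  have hderiv (s : ℝ) : HasDerivAt (fun s => -φ s) (s * φ s) s :=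
    (hasDerivAt_gaussianPDFReal 0 1 s).neg.congr_deriv (by simp)
  simpa using integral_Ioi_of_hasDerivAt_of_tendsto' (fun s _ => hderiv s)
    integrable_id_mul_gaussianPDFReal.integrableOn hlim

lemma mul_one_sub_F_lt (x : ℝ) : x * (1 - F x) < φ x := by
  have hφ := integrable_gaussianPDFReal 0 1
  have hpos : 0 < ∫ s in Ioi x, (s - x) * φ s :=
    setIntegral_Ioi_pos
      (fun s hs => mul_pos (sub_pos.2 hs) (gaussianPDFReal_pos 0 1 s one_ne_zero))
      ((integrable_id_mul_gaussianPDFReal.sub (hφ.const_mul x)).integrableOn.congr_fun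
        (fun s _ => (sub_mul s x (φ s)).symm) measurableSet_Ioi)
  simp only [sub_mul] at hpos
  rw [integral_sub integrable_id_mul_gaussianPDFReal.integrableOn (hφ.const_mul x).integrableOn,
    integral_Ioi_mul_gaussianPDFReal, integral_const_mul, ← one_sub_F_eq_integral_Ioi] at hpos
  linarith

lemma hasDerivAt_neg_log_one_sub_F (x : ℝ) :
    HasDerivAt (fun x => -log (1 - F x)) (φ x / (1 - F x)) x :=
  (((hasDerivAt_F x).const_sub 1).log (one_sub_F_pos x).ne').neg.congr_deriv (by ring)

lemma strictMono_gaussianPDFReal_div_one_sub_F : StrictMono fun x => φ x / (1 - F x) := by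
  refine strictMono_of_deriv_pos fun x => ?_
  rw [((hasDerivAt_gaussianPDFReal 0 1 x).fun_div ((hasDerivAt_F x).const_sub 1)
    (one_sub_F_pos x).ne').deriv]
  refine div_pos ?_ (pow_pos (one_sub_F_pos x) 2)
  convert mul_pos (gaussianPDFReal_pos 0 1 x one_ne_zero) (sub_pos.2 (mul_one_sub_F_lt x)) using 1
  simp only [sub_zero, NNReal.coe_one, div_one]
  ring

end

theorem strictConvexOn_neg_log_one_sub_F :
    StrictConvexOn ℝ Set.univ (fun x : ℝ => -Real.log (1 - F x)) := by
  have hderiv := hasDerivAt_neg_log_one_sub_F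
  refine StrictMono.strictConvexOn_univ_of_deriv
    (continuous_iff_continuousAt.2 fun x => (hderiv x).continuousAt) ?_
  rw [funext fun x => (hderiv x).deriv]
  exact strictMono_gaussianPDFReal_div_one_sub_F
end

section
/- With the setup of the entropy E on Ω, if E(ξ̄) ≤ c then for each index k with aₖ > 0 one has F((ξ_{k+1}-vₖ)/aₖ) - F((ξₖ-vₖ)/aₖ) ≥ exp(-c/m) where m = min over k with aₖ > 0 of aₖ²(u_{k+1}-uₖ) > 0, and consequently ξ_{k+1} - ξₖ ≥ aₖ·exp(-c/m) for 1 ≤ k ≤ d-1. -/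
/-- Extension of `F` to `EReal` with the conventions `F(-∞) = 0`, `F(+∞) = 1`. -/
noncomputable def Fe (e : EReal) : ℝ :=
  if e = ⊥ then 0 else if e = ⊤ then 1 else F e.toReal

/-- The extended vector of discontinuity speeds: `Ξ 0 = -∞`, `Ξ k = ξₖ` for
`1 ≤ k ≤ d`, and `Ξ k = +∞` for `k > d`. -/
noncomputable def Xi (d : ℕ) (ξ : Fin d → ℝ) (k : ℕ) : EReal :=
  if h : 1 ≤ k ∧ k ≤ d then ((ξ ⟨k - 1, by omega⟩ : ℝ) : EReal)
  else if k = 0 then ⊥ else ⊤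

/-- The entropy function
`E(ξ̄) = -Σ_{k : aₖ>0} aₖ²(u_{k+1}-uₖ) ln(F((ξ_{k+1}-vₖ)/aₖ) - F((ξₖ-vₖ)/aₖ))
       + (1/2) Σ_{k : aₖ=0} (u_{k+1}-uₖ)(ξ_{k+1}-vₖ)²`. -/
noncomputable def entropyE (n : ℕ) (u v a : ℕ → ℝ) (d : ℕ) (ξ : Fin d → ℝ) : ℝ :=
  ∑ k ∈ Finset.range n,
    if 0 < a k then
      -((a k) ^ 2 * (u (k + 1) - u k) *
        Real.log (Fe ((Xi d ξ (k + 1) - (v k : EReal)) / (a k : EReal)) -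
                  Fe ((Xi d ξ k - (v k : EReal)) / (a k : EReal))))
    else (1 / 2) * (u (k + 1) - u k) * ((Xi d ξ (k + 1)).toReal - v k) ^ 2

/-- The cone `Ω`: `ξ₁ ≤ ⋯ ≤ ξ_d`, with strict inequality `ξₖ < ξ_{k+1}` whenever
`aₖ > 0` (in the extended indexing including `ξ₀ = -∞`, `ξ_{d+1} = +∞`). -/
def OmegaCone (n : ℕ) (a : ℕ → ℝ) (d : ℕ) : Set (Fin d → ℝ) :=
  {ξ | ∀ k < n, Xi d ξ k ≤ Xi d ξ (k + 1) ∧ (0 < a k → Xi d ξ k < Xi d ξ (k + 1))}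

/-!
Every summand of `E` is nonnegative: the gap `Dₖ = F((ξ_{k+1}-vₖ)/aₖ) - F((ξₖ-vₖ)/aₖ)` lies in
`[-1, 1]`, so its logarithm is nonpositive. Hence each single summand `aₖ²(u_{k+1}-uₖ)(-log Dₖ)` is at most `c`,
and since its weight is at least `m`, `log Dₖ ≥ -c/m`. The spacing bound follows because the
Gaussian density is at most `1/√(2π) ≤ 1`, so `F` is 1-Lipschitz and `Dₖ ≤ (ξ_{k+1}-ξₖ)/aₖ`.
-/

open Real MeasureTheory Set

lemma integrable_exp_neg_sq_div_two : Integrable fun s : ℝ => exp (-s ^ 2 / 2) := by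
  simpa [neg_div, div_eq_inv_mul, mul_comm] using
    integrable_exp_neg_mul_sq (b := 1 / 2) (by norm_num)

lemma integral_exp_neg_sq_div_two : ∫ s : ℝ, exp (-s ^ 2 / 2) = √(2 * π) := by
  simpa [neg_div, div_eq_inv_mul, mul_comm] using integral_gaussian (1 / 2)

lemma F_sub_F (x y : ℝ) :
    F y - F x = (1 / √(2 * π)) * ∫ s in x..y, exp (-s ^ 2 / 2) := by
  rw [F, F, ← mul_sub, intervalIntegral.integral_Iic_sub_Iic
    integrable_exp_neg_sq_div_two.integrableOn integrable_exp_neg_sq_div_two.integrableOn]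

lemma F_strictMono : StrictMono F := fun x y hxy => by
  have hpos : 0 < ∫ s in x..y, exp (-s ^ 2 / 2) :=
    intervalIntegral.intervalIntegral_pos_of_pos
      integrable_exp_neg_sq_div_two.intervalIntegrable (fun _ => exp_pos _) hxy
  exact sub_pos.1 (by rw [F_sub_F]; positivity)

lemma F_nonneg (z : ℝ) : 0 ≤ F z :=
  mul_nonneg (by positivity) (setIntegral_nonneg measurableSet_Iic fun _ _ => (exp_pos _).le)

lemma F_le_one (z : ℝ) : F z ≤ 1 := by
  have hle : ∫ s in Iic z, exp (-s ^ 2 / 2) ≤ √(2 * π) :=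
    integral_exp_neg_sq_div_two ▸ setIntegral_le_integral integrable_exp_neg_sq_div_two
      (Filter.Eventually.of_forall fun _ => (exp_pos _).le)
  rw [F, one_div_mul_eq_div]
  exact div_le_one_of_le₀ hle (sqrt_nonneg _)

lemma F_pos (z : ℝ) : 0 < F z := (F_nonneg (z - 1)).trans_lt (F_strictMono (by linarith))

lemma F_lt_one (z : ℝ) : F z < 1 := (F_strictMono (lt_add_one z)).trans_le (F_le_one _)

lemma F_sub_F_le {x y : ℝ} (hxy : x ≤ y) : F y - F x ≤ y - x := by
  have hdensity : ∫ s in x..y, exp (-s ^ 2 / 2) ≤ y - x := by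
    simpa using intervalIntegral.integral_mono_on hxy
      integrable_exp_neg_sq_div_two.intervalIntegrable intervalIntegrable_const
      fun s _ => exp_le_one_iff.2 (by nlinarith [sq_nonneg s])
  have hscale : 1 / √(2 * π) ≤ 1 :=
    (div_le_one (by positivity)).2 (one_le_sqrt.2 (by nlinarith [pi_gt_three]))
  have hint : 0 ≤ ∫ s in x..y, exp (-s ^ 2 / 2) :=
    intervalIntegral.integral_nonneg hxy fun _ _ => (exp_pos _).le
  rw [F_sub_F]
  exact (mul_le_of_le_one_left hint hscale).trans hdensity

@[simp] lemma Fe_bot : Fe ⊥ = 0 := by simp [Fe]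

@[simp] lemma Fe_top : Fe ⊤ = 1 := by simp [Fe]

@[simp] lemma Fe_coe (r : ℝ) : Fe r = F r := by simp [Fe]

lemma Fe_strictMono : StrictMono Fe := by
  intro x y hxy
  induction x using EReal.rec with
  | top => exact absurd hxy not_top_lt
  | bot =>
    induction y using EReal.rec with
    | bot => exact absurd hxy (lt_irrefl _)
    | coe s => simpa using F_pos s
    | top => simp
  | coe r =>
    induction y using EReal.rec with
    | bot => exact absurd hxy not_lt_bot
    | coe s => simpa using F_strictMono (EReal.coe_lt_coe_iff.1 hxy)
    | top => simpa using F_lt_one r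

lemma Fe_nonneg (x : EReal) : 0 ≤ Fe x := Fe_bot ▸ Fe_strictMono.monotone bot_le

lemma Fe_le_one (x : EReal) : Fe x ≤ 1 := Fe_top ▸ Fe_strictMono.monotone le_top

lemma abs_Fe_sub_Fe_le_one (x y : EReal) : |Fe y - Fe x| ≤ 1 :=
  abs_sub_le_iff.2
    ⟨by linarith [Fe_le_one y, Fe_nonneg x], by linarith [Fe_le_one x, Fe_nonneg y]⟩

/-- `log` is applied to a gap that may be negative; `Real.log` then reads it as `log |·|`. -/
lemma log_Fe_sub_Fe_nonpos (x y : EReal) : log (Fe y - Fe x) ≤ 0 := by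
  simpa only [log_abs] using log_nonpos (abs_nonneg _) (abs_Fe_sub_Fe_le_one x y)

lemma EReal.strictMono_sub_coe_div_coe {a : ℝ} (v : ℝ) (ha : 0 < a) :
    StrictMono fun x : EReal => (x - v) / a := fun _ _ hxy =>
  EReal.div_lt_div_right_of_pos (EReal.coe_pos.2 ha) (EReal.coe_ne_top _)
    (EReal.sub_lt_sub_of_lt_of_le hxy le_rfl (EReal.coe_ne_bot _) (EReal.coe_ne_top _))

lemma Fe_sub_Fe_coe_le {x y : ℝ} (v : ℝ) {a : ℝ} (ha : 0 < a) (hxy : x ≤ y) :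
    Fe ((y - v : EReal) / a) - Fe ((x - v : EReal) / a) ≤ (y - x) / a := by
  simp only [← EReal.coe_sub, ← EReal.coe_div, Fe_coe]
  calc F ((y - v) / a) - F ((x - v) / a) ≤ (y - v) / a - (x - v) / a :=
        F_sub_F_le (div_le_div_of_nonneg_right (by linarith) ha.le)
    _ = (y - x) / a := by ring

lemma coe_toReal_Xi {d : ℕ} (ξ : Fin d → ℝ) {k : ℕ} (hk₁ : 1 ≤ k) (hk₂ : k ≤ d) :
    ((Xi d ξ k).toReal : EReal) = Xi d ξ k := by
  simp [Xi, hk₁, hk₂]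

lemma entropyE_summand_nonneg {n : ℕ} {u : ℕ → ℝ} (hu : ∀ k < n, u k < u (k + 1))
    (v a : ℕ → ℝ) (d : ℕ) (ξ : Fin d → ℝ) {k : ℕ} (hk : k < n) :
    0 ≤ if 0 < a k then
      -((a k) ^ 2 * (u (k + 1) - u k) *
        log (Fe ((Xi d ξ (k + 1) - (v k : EReal)) / (a k : EReal)) -
             Fe ((Xi d ξ k - (v k : EReal)) / (a k : EReal))))
    else (1 / 2) * (u (k + 1) - u k) * ((Xi d ξ (k + 1)).toReal - v k) ^ 2 := by
  have hdu := sub_pos.2 (hu k hk)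
  split_ifs
  · exact neg_nonneg.2 (mul_nonpos_of_nonneg_of_nonpos (by positivity) (log_Fe_sub_Fe_nonpos _ _))
  · positivity

lemma neg_log_summand_le_entropyE {n : ℕ} {u : ℕ → ℝ} (hu : ∀ k < n, u k < u (k + 1))
    (v a : ℕ → ℝ) (d : ℕ) (ξ : Fin d → ℝ) {k : ℕ} (hk : k < n) (hak : 0 < a k) :
    -((a k) ^ 2 * (u (k + 1) - u k) *
        log (Fe ((Xi d ξ (k + 1) - (v k : EReal)) / (a k : EReal)) -
             Fe ((Xi d ξ k - (v k : EReal)) / (a k : EReal)))) ≤ entropyE n u v a d ξ := by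
  have := Finset.single_le_sum (fun j hj => entropyE_summand_nonneg hu v a d ξ
    (Finset.mem_range.1 hj)) (Finset.mem_range.2 hk)
  rwa [if_pos hak] at this

lemma exp_neg_div_le_of_neg_mul_log_le {w m c D : ℝ} (hm : 0 < m) (hmw : m ≤ w)
    (hD : 0 < D) (hD₁ : D ≤ 1) (h : -(w * log D) ≤ c) : exp (-c / m) ≤ D := by
  have hlog : log D ≤ 0 := log_nonpos hD.le hD₁
  have : -c / m ≤ log D := by
    rw [div_le_iff₀ hm]
    nlinarith
  simpa [exp_log hD] using exp_le_exp.2 this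

theorem entropyE_sublevel_bounds_general (n : ℕ) (u v a : ℕ → ℝ)
    (hu : ∀ k < n, u k < u (k + 1))
    (hne : ((Finset.range n).filter fun k => 0 < a k).Nonempty)
    (d : ℕ) (hd : d = if 0 < a (n - 1) then n - 1 else n)
    (c : ℝ) (m : ℝ)
    (hm : m = ((Finset.range n).filter fun k => 0 < a k).inf' hne
        (fun k => (a k) ^ 2 * (u (k + 1) - u k)))
    (ξ : Fin d → ℝ) (hξ : ξ ∈ OmegaCone n a d)
    (hE : entropyE n u v a d ξ ≤ c) :
    0 < m ∧
    (∀ k < n, 0 < a k →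
      Real.exp (-c / m) ≤
        Fe ((Xi d ξ (k + 1) - (v k : EReal)) / (a k : EReal)) -
        Fe ((Xi d ξ k - (v k : EReal)) / (a k : EReal))) ∧
    (∀ k, 1 ≤ k → k ≤ d - 1 →
      a k * Real.exp (-c / m) ≤ (Xi d ξ (k + 1)).toReal - (Xi d ξ k).toReal) := by
  have hweight : ∀ k < n, 0 < a k → m ≤ a k ^ 2 * (u (k + 1) - u k) := fun k hk hak =>
    hm ▸ Finset.inf'_le _ (Finset.mem_filter.2 ⟨Finset.mem_range.2 hk, hak⟩)
  have hm_pos : 0 < m := by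
    rw [hm, Finset.lt_inf'_iff]
    intro k hk
    rw [Finset.mem_filter, Finset.mem_range] at hk
    exact mul_pos (pow_pos hk.2 2) (sub_pos.2 (hu k hk.1))
  have hgap : ∀ k < n, 0 < a k → exp (-c / m) ≤
      Fe ((Xi d ξ (k + 1) - (v k : EReal)) / (a k : EReal)) -
      Fe ((Xi d ξ k - (v k : EReal)) / (a k : EReal)) := fun k hk hak =>
    exp_neg_div_le_of_neg_mul_log_le hm_pos (hweight k hk hak)
      (sub_pos.2 (Fe_strictMono (EReal.strictMono_sub_coe_div_coe _ hak ((hξ k hk).2 hak))))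
      ((le_abs_self _).trans (abs_Fe_sub_Fe_le_one _ _))
      ((neg_log_summand_le_entropyE hu v a d ξ hk hak).trans hE)
  refine ⟨hm_pos, hgap, fun k hk₁ hk₂ => ?_⟩
  have hk : k < n := by split_ifs at hd <;> omega
  have hxy := (hξ k hk).1
  have hgapk := hgap k hk
  rw [← coe_toReal_Xi ξ hk₁ (by omega), ← coe_toReal_Xi ξ (k := k + 1) (by omega) (by omega)]
    at hxy hgapk
  rcases lt_or_ge 0 (a k) with hak | hak
  · rw [← le_div_iff₀' hak]
    exact (hgapk hak).trans (Fe_sub_Fe_coe_le _ hak (EReal.coe_le_coe_iff.1 hxy))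
  · nlinarith [exp_pos (-c / m), EReal.coe_le_coe_iff.1 hxy]

theorem entropyE_sublevel_bounds (n : ℕ) (hn : 0 < n) (u v a : ℕ → ℝ)
    (hu : ∀ k < n, u k < u (k + 1)) (ha : ∀ k, 0 ≤ a k)
    (hne : ((Finset.range n).filter fun k => 0 < a k).Nonempty)
    (d : ℕ) (hd : d = if 0 < a (n - 1) then n - 1 else n)
    (c : ℝ) (hc : 0 ≤ c) (m : ℝ)
    (hm : m = ((Finset.range n).filter fun k => 0 < a k).inf' hne
        (fun k => (a k) ^ 2 * (u (k + 1) - u k)))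
    (ξ : Fin d → ℝ) (hξ : ξ ∈ OmegaCone n a d)
    (hE : entropyE n u v a d ξ ≤ c) :
    0 < m ∧
    (∀ k < n, 0 < a k →
      Real.exp (-c / m) ≤
        Fe ((Xi d ξ (k + 1) - (v k : EReal)) / (a k : EReal)) -
        Fe ((Xi d ξ k - (v k : EReal)) / (a k : EReal))) ∧
    (∀ k, 1 ≤ k → k ≤ d - 1 →
      a k * Real.exp (-c / m) ≤ (Xi d ξ (k + 1)).toReal - (Xi d ξ k).toReal) :=
  entropyE_sublevel_bounds_general n u v a hu hne d hd c m hm ξ hξ hE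
end
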